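/- For any real θ > 0 and positive integer n, θ{log(1+n/θ) - 5/3 + 3θ/(n+θ) - 2θ²/(n+θ)² + 2θ³/(3(n+θ)³)} + n/(2(n+θ)) - 5 ≤ ∑_{i=1}^n p_i(1-p_i)(p_i² + (1-p_i)²) ≤ θ{log(1+n/θ) - 5/3 + 3θ/(n+θ) - 2θ²/(n+θ)² + 2θ³/(3(n+θ)³)} + 4 + n/(n+θ), where p_i = θ/(θ+i-1). -/

import Mathlib

/-
With `p = θ / u` the summand is `p (1 - p) (p² + (1 - p)²) = θ/u - 3θ²/u² + 4θ³/u³ - 2θ⁴/u⁴`,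
whose primitive in `u` is `Φ u = θ log u + 3θ²/u - 2θ³/u² + (2/3)θ⁴/u³`; the bracket `θ{…}` of the
theorem is exactly `Φ (θ + n) - Φ θ`. Adding suitable lower-order terms to `Φ` gives two potentials
whose increments over `[u, u + 1]` lie below, resp. above, the summand at `u`: this needs only
`1/(u+1) ≤ log(u+1) - log u ≤ (2u+1)/(2u(u+1))` and the positivity of explicit rational remainders.
Summing over `u = θ, θ + 1, …, θ + n - 1` telescopes, and the correction terms at `θ` and `θ + n`
account for the remaining terms of the two bounds, up to nonnegative slack.
-/

open Real Finset

lemma sub_le_sum_range_of_forall_sub_le {F g : ℝ → ℝ} {a : ℝ}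
    (h : ∀ u, a ≤ u → F (u + 1) - F u ≤ g u) (n : ℕ) :
    F (a + n) - F a ≤ ∑ i ∈ range n, g (a + i) := by
  have htel := sum_range_sub (fun k : ℕ => F (a + k)) n
  simp only [Nat.cast_add, Nat.cast_one, Nat.cast_zero, add_zero, ← add_assoc] at htel
  rw [← htel]
  gcongr with i
  exact h _ (le_add_of_nonneg_right i.cast_nonneg)

lemma sum_range_le_sub_of_forall_le_sub {F g : ℝ → ℝ} {a : ℝ}
    (h : ∀ u, a ≤ u → g u ≤ F (u + 1) - F u) (n : ℕ) :
    ∑ i ∈ range n, g (a + i) ≤ F (a + n) - F a := by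
  have htel := sum_range_sub (fun k : ℕ => F (a + k)) n
  simp only [Nat.cast_add, Nat.cast_one, Nat.cast_zero, add_zero, ← add_assoc] at htel
  rw [← htel]
  gcongr with i
  exact h _ (le_add_of_nonneg_right i.cast_nonneg)

namespace Real

lemma one_div_add_one_le_log_add_one_sub_log {u : ℝ} (hu : 0 < u) :
    1 / (u + 1) ≤ log (u + 1) - log u := by
  have h := one_sub_inv_le_log_of_pos (show 0 < (u + 1) / u by positivity)
  rw [log_div (by positivity) hu.ne', inv_div] at h
  convert h using 1
  field_simp
  ring

-- `log x < sinh (log x) = (x - x⁻¹) / 2` for `x = (u + 1) / u > 1`.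
lemma log_add_one_sub_log_le {u : ℝ} (hu : 0 < u) :
    log (u + 1) - log u ≤ (2 * u + 1) / (2 * u * (u + 1)) := by
  have hx : 1 < (u + 1) / u := by rw [lt_div_iff₀ hu]; linarith
  have h := self_lt_sinh_iff.mpr (log_pos hx)
  rw [sinh_log (by positivity), log_div (by positivity) hu.ne', inv_div] at h
  refine h.le.trans_eq ?_
  field_simp
  ring

end Real

def thirdAbsMoment (p : ℝ) : ℝ := p * (1 - p) * (p ^ 2 + (1 - p) ^ 2)

section Potentials

variable {θ u : ℝ}

noncomputable def thirdAbsMomentPrimitive (θ u : ℝ) : ℝ :=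
  θ * log u + 3 * θ ^ 2 / u - 2 * θ ^ 3 / u ^ 2 + 2 / 3 * θ ^ 4 / u ^ 3

noncomputable def lowerPotential (θ u : ℝ) : ℝ :=
  thirdAbsMomentPrimitive θ u - θ / (2 * u) + 3 * θ ^ 2 / u ^ 2 + 2 * θ ^ 4 / u ^ 4

noncomputable def upperPotential (θ u : ℝ) : ℝ :=
  thirdAbsMomentPrimitive θ u - θ / u - 4 * θ ^ 3 / u ^ 3

lemma lowerPotential_add_one_sub_le (hθ : 0 ≤ θ) (hu : 0 < u) :
    lowerPotential θ (u + 1) - lowerPotential θ u ≤ thirdAbsMoment (θ / u) := by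
  have hlog := mul_le_mul_of_nonneg_left (log_add_one_sub_log_le hu) hθ
  have hrem : thirdAbsMoment (θ / u) - (lowerPotential θ (u + 1) - lowerPotential θ u)
      = θ * ((2 * u + 1) / (2 * u * (u + 1)) - (log (u + 1) - log u))
        + 3 * θ ^ 2 / (u * (u + 1) ^ 2) + 2 * θ ^ 3 * (3 * u + 2) / (u ^ 3 * (u + 1) ^ 2)
        + 2 / 3 * θ ^ 4 * (6 * u ^ 2 + 4 * u + 1) / (u ^ 3 * (u + 1) ^ 4) := by
    simp only [thirdAbsMoment, lowerPotential, thirdAbsMomentPrimitive]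
    field_simp
    ring
  have : 0 ≤ thirdAbsMoment (θ / u) - (lowerPotential θ (u + 1) - lowerPotential θ u) := by
    rw [hrem]
    have : 0 ≤ θ * ((2 * u + 1) / (2 * u * (u + 1)) - (log (u + 1) - log u)) := by
      rw [mul_sub]; linarith
    positivity
  linarith

lemma le_upperPotential_add_one_sub (hθ : 0 ≤ θ) (hu : 0 < u) :
    thirdAbsMoment (θ / u) ≤ upperPotential θ (u + 1) - upperPotential θ u := by
  have hlog := mul_le_mul_of_nonneg_left (one_div_add_one_le_log_add_one_sub_log hu) hθ
  have hrem : upperPotential θ (u + 1) - upperPotential θ u - thirdAbsMoment (θ / u)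
      = θ * ((log (u + 1) - log u) - 1 / (u + 1))
        + 3 * θ ^ 2 / (u ^ 2 * (u + 1)) + 2 * θ ^ 3 * (3 * u + 1) / (u ^ 2 * (u + 1) ^ 3)
        + 2 / 3 * θ ^ 4 * (6 * u ^ 2 + 8 * u + 3) / (u ^ 4 * (u + 1) ^ 3) := by
    simp only [thirdAbsMoment, upperPotential, thirdAbsMomentPrimitive]
    field_simp
    ring
  have : 0 ≤ upperPotential θ (u + 1) - upperPotential θ u - thirdAbsMoment (θ / u) := by
    rw [hrem]
    have : 0 ≤ θ * ((log (u + 1) - log u) - 1 / (u + 1)) := by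
      rw [mul_sub]; linarith
    positivity
  linarith

variable {x : ℝ}

lemma thirdAbsMomentPrimitive_sub (hθ : 0 < θ) (hx : 0 ≤ x) :
    thirdAbsMomentPrimitive θ (θ + x) - thirdAbsMomentPrimitive θ θ =
      θ * (log (1 + x / θ) - 5 / 3 + 3 * θ / (x + θ) - 2 * θ ^ 2 / (x + θ) ^ 2
        + 2 * θ ^ 3 / (3 * (x + θ) ^ 3)) := by
  have hlog : log (1 + x / θ) = log (θ + x) - log θ := by
    rw [← log_div (by positivity) hθ.ne', add_div, div_self hθ.ne']
  rw [hlog]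
  simp only [thirdAbsMomentPrimitive]
  field_simp
  ring

lemma le_lowerPotential_sub (hθ : 0 < θ) (hx : 0 ≤ x) :
    thirdAbsMomentPrimitive θ (θ + x) - thirdAbsMomentPrimitive θ θ + x / (2 * (x + θ)) - 5 ≤
      lowerPotential θ (θ + x) - lowerPotential θ θ := by
  have hrem : lowerPotential θ (θ + x) - lowerPotential θ θ -
      (thirdAbsMomentPrimitive θ (θ + x) - thirdAbsMomentPrimitive θ θ + x / (2 * (x + θ)) - 5)
      = 3 * θ ^ 2 / (θ + x) ^ 2 + 2 * θ ^ 4 / (θ + x) ^ 4 := by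
    simp only [lowerPotential]
    field_simp
    ring
  have : 0 ≤ 3 * θ ^ 2 / (θ + x) ^ 2 + 2 * θ ^ 4 / (θ + x) ^ 4 := by positivity
  linarith

lemma upperPotential_sub_le (hθ : 0 < θ) (hx : 0 ≤ x) :
    upperPotential θ (θ + x) - upperPotential θ θ ≤
      thirdAbsMomentPrimitive θ (θ + x) - thirdAbsMomentPrimitive θ θ + 4 + x / (x + θ) := by
  have hrem : thirdAbsMomentPrimitive θ (θ + x) - thirdAbsMomentPrimitive θ θ + 4 + x / (x + θ)
      - (upperPotential θ (θ + x) - upperPotential θ θ) = 4 * θ ^ 3 / (θ + x) ^ 3 := by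
    simp only [upperPotential]
    field_simp
    ring
  have : 0 ≤ 4 * θ ^ 3 / (θ + x) ^ 3 := by positivity
  linarith

end Potentials

theorem stmt_12 (θ : ℝ) (hθ : 0 < θ) (n : ℕ) :
    θ * (Real.log (1 + n / θ) - 5 / 3 + 3 * θ / (n + θ) - 2 * θ ^ 2 / (n + θ) ^ 2
        + 2 * θ ^ 3 / (3 * (n + θ) ^ 3)) + n / (2 * (n + θ)) - 5 ≤
      ∑ i ∈ Finset.range n, θ / (θ + i) * (1 - θ / (θ + i))
        * ((θ / (θ + i)) ^ 2 + (1 - θ / (θ + i)) ^ 2) ∧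
    ∑ i ∈ Finset.range n, θ / (θ + i) * (1 - θ / (θ + i))
        * ((θ / (θ + i)) ^ 2 + (1 - θ / (θ + i)) ^ 2) ≤
      θ * (Real.log (1 + n / θ) - 5 / 3 + 3 * θ / (n + θ) - 2 * θ ^ 2 / (n + θ) ^ 2
        + 2 * θ ^ 3 / (3 * (n + θ) ^ 3)) + 4 + n / (n + θ) := by
  rw [← thirdAbsMomentPrimitive_sub hθ n.cast_nonneg]
  exact ⟨(le_lowerPotential_sub hθ n.cast_nonneg).trans <|
      sub_le_sum_range_of_forall_sub_le
        (fun u hu => lowerPotential_add_one_sub_le hθ.le (hθ.trans_le hu)) n,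
    (sum_range_le_sub_of_forall_le_sub
        (fun u hu => le_upperPotential_add_one_sub hθ.le (hθ.trans_le hu)) n).trans <|
      upperPotential_sub_le hθ n.cast_nonneg⟩
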